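/- Let g be a finite-dimensional nilpotent real Lie algebra endowed with a complex structure J. If the center ξ of g is not J-invariant (i.e. Jξ ⊄ ξ), then for every J-compatible inner product ⟨·,·⟩ on g the Bismut torsion 3-form c is not closed, i.e. dc ≠ 0; in other words (g,J) admits no SKT inner product. -/

import Mathlib

/-!
Let `Z` be central with `W := J Z` not central. Integrability at `Z` says that `ad W` commutes
with `J`, and `J W = -Z` is central. If `ad W` kills every bracket `⁅x, y⁆`, then with
`u := ⁅W, x⁆` the SKT equation evaluated at `(Z, x, J x, W)` collapses to `-2 ⟨u, u⟩ = 0`, so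
`ad W` kills `x` too. In a nilpotent Lie algebra this propagates up the upper central series
from `0` to everything, so `W` would be central.
-/

/-- The Bismut torsion 3-form of a complex structure `J` and a `J`-compatible inner
product `B` on a Lie algebra: `c(X,Y,Z) = −⟨[JX,JY],Z⟩ − ⟨[JY,JZ],X⟩ − ⟨[JZ,JX],Y⟩`. -/
def bismutC {g R : Type*} [LieRing g] [Ring R] (B : g → g → R) (J : g → g)
    (X Y Z : g) : R :=
  - B ⁅J X, J Y⁆ Z - B ⁅J Y, J Z⁆ X - B ⁅J Z, J X⁆ Y

/-- The Chevalley–Eilenberg differential of a 3-form `c` on a Lie algebra. -/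
def dC {g R : Type*} [LieRing g] [Ring R] (c : g → g → g → R) (X Y Z W : g) : R :=
  - c ⁅X, Y⁆ Z W + c ⁅X, Z⁆ Y W - c ⁅X, W⁆ Y Z
    - c ⁅Y, Z⁆ X W + c ⁅Y, W⁆ X Z - c ⁅Z, W⁆ X Y

theorem LieRing.IsNilpotent.induction_on_lie {L : Type*} [LieRing L] [LieRing.IsNilpotent L]
    {P : L → Prop} (zero : P 0) (lie : ∀ x, (∀ y, P ⁅x, y⁆) → P x) (x : L) : P x := by
  obtain ⟨k, hk⟩ := (LieModule.isNilpotent_iff_exists_ucs_eq_top ℤ).mp ‹_›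
  have hucs : ∀ n, ∀ x ∈ (⊥ : LieSubmodule ℤ L L).ucs n, P x := by
    intro n
    induction n with
    | zero =>
      intro x hx
      rw [LieSubmodule.ucs_zero, LieSubmodule.mem_bot] at hx
      exact hx ▸ zero
    | succ n ih =>
      intro x hx
      rw [LieSubmodule.ucs_succ, LieSubmodule.mem_normalizer] at hx
      exact lie x fun y => ih _ (by rw [← lie_skew]; exact neg_mem (hx y))
  exact hucs k x (hk ▸ LieSubmodule.mem_top x)

section

variable {R L : Type*} [CommRing R] [LieRing L] [LieAlgebra R L]

theorem lie_map_map_of_forall_lie_eq_zero (J : L →ₗ[R] L)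
    (hJint : ∀ X Y : L, ⁅X, Y⁆ - ⁅J X, J Y⁆ + J ⁅J X, Y⁆ + J ⁅X, J Y⁆ = 0)
    {Z : L} (hZ : ∀ Y : L, ⁅Z, Y⁆ = 0) (y : L) : ⁅J Z, J y⁆ = J ⁅J Z, y⁆ := by
  have h := hJint Z y
  rw [hZ y, hZ (J y), map_zero, zero_sub, add_zero] at h
  exact neg_add_eq_zero.mp h

theorem bismutC_zero_left (B : L →ₗ[R] L →ₗ[R] R) (J : L →ₗ[R] L) (b d : L) :
    bismutC (fun a b => B a b) J 0 b d = 0 := by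
  simp [bismutC]

theorem bismutC_neg_left (B : L →ₗ[R] L →ₗ[R] R) (J : L →ₗ[R] L) (a b d : L) :
    bismutC (fun a b => B a b) J (-a) b d = -bismutC (fun a b => B a b) J a b d := by
  simp only [bismutC, map_neg, neg_lie, lie_neg, LinearMap.neg_apply]
  ring

theorem dC_bismutC_center_eq (J : L →ₗ[R] L) (hJ2 : ∀ X : L, J (J X) = -X)
    (hJint : ∀ X Y : L, ⁅X, Y⁆ - ⁅J X, J Y⁆ + J ⁅J X, Y⁆ + J ⁅X, J Y⁆ = 0)
    (B : L →ₗ[R] L →ₗ[R] R) (hBJ : ∀ X Y : L, B (J X) (J Y) = B X Y)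
    {Z : L} (hZ : ∀ Y : L, ⁅Z, Y⁆ = 0) {x : L} (hx : ∀ y : L, ⁅J Z, ⁅x, y⁆⁆ = 0) :
    dC (bismutC (fun a b => B a b) J) Z x (J x) (J Z) =
      -(2 * B ⁅J Z, x⁆ ⁅J Z, x⁆) := by
  set W := J Z with hW
  set u := ⁅W, x⁆ with hu
  have hWJ : ∀ y, ⁅W, J y⁆ = J ⁅W, y⁆ := lie_map_map_of_forall_lie_eq_zero J hJint hZ
  have hJW : ∀ v : L, ⁅J W, v⁆ = 0 := fun v => by rw [hW, hJ2, neg_lie, hZ, neg_zero]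
  have hWJW : ⁅W, J W⁆ = 0 := by rw [← lie_skew, hJW, neg_zero]
  have hWu : ⁅W, u⁆ = 0 := by
    simpa only [← lie_skew x W, lie_neg, neg_eq_zero] using hx W
  -- `ad W` is a derivation vanishing on `⁅x, L⁆`
  have hJxu : ⁅J x, u⁆ = ⁅x, J u⁆ := by
    have h := leibniz_lie W x (J x)
    rw [hx, hWJ, ← hu] at h
    rw [← lie_skew, eq_neg_of_add_eq_zero_left h.symm, neg_neg]
  have c₁ : bismutC (fun a b => B a b) J ⁅x, J x⁆ Z W = 0 := by
    have e : ⁅J ⁅x, J x⁆, W⁆ = 0 := by rw [← lie_skew, hWJ, hx, map_zero, neg_zero]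
    simp [bismutC, ← hW, e, hJW, hWJW]
  have c₂ : bismutC (fun a b => B a b) J u Z (J x) = B u u + B ⁅x, J u⁆ Z := by
    have e : ⁅J u, W⁆ = 0 := by rw [← lie_skew, hWJ, hWu, map_zero, neg_zero]
    simp only [bismutC, ← hW, e, hJ2, lie_neg, neg_lie, ← hu, map_zero, map_neg,
      LinearMap.zero_apply, LinearMap.neg_apply]
    ring
  have c₃ : bismutC (fun a b => B a b) J (J u) Z x = -B u u + B ⁅x, J u⁆ Z := by
    have e : ⁅u, W⁆ = 0 := by rw [← lie_skew, hWu, neg_zero]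
    simp only [bismutC, ← hW, hJ2, neg_lie, lie_neg, hWJ, ← hu, e, hBJ, hJxu, map_zero,
      map_neg, LinearMap.zero_apply, LinearMap.neg_apply]
    ring
  have hxW : ⁅x, W⁆ = -u := by rw [← lie_skew]
  have hJxW : ⁅J x, W⁆ = -J u := by rw [← lie_skew, hWJ]
  rw [dC, hZ, hZ, hZ, hxW, hJxW, bismutC_zero_left, bismutC_zero_left, bismutC_zero_left,
    bismutC_neg_left, bismutC_neg_left, c₁, c₂, c₃]
  ring

end

theorem no_SKT_of_center_not_J_invariant_general
    {g : Type*} [LieRing g] [LieAlgebra ℝ g]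
    [LieRing.IsNilpotent g]
    (J : g →ₗ[ℝ] g)
    (hJ2 : ∀ X : g, J (J X) = -X)
    (hJint : ∀ X Y : g, ⁅X, Y⁆ - ⁅J X, J Y⁆ + J ⁅J X, Y⁆ + J ⁅X, J Y⁆ = 0)
    (hcenter : ∃ X : g, (∀ Y : g, ⁅X, Y⁆ = 0) ∧ ∃ Y : g, ⁅J X, Y⁆ ≠ 0) :
    ∀ B : g →ₗ[ℝ] g →ₗ[ℝ] ℝ,
      (∀ X Y : g, B X Y = B Y X) →
      (∀ X : g, X ≠ 0 → 0 < B X X) →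
      (∀ X Y : g, B (J X) (J Y) = B X Y) →
      ∃ X Y Z W : g, dC (bismutC (fun a b => B a b) J) X Y Z W ≠ 0 := by
  intro B _ hpos hBJ
  obtain ⟨Z, hZ, Y, hY⟩ := hcenter
  by_contra! hSKT
  refine hY (LieRing.IsNilpotent.induction_on_lie (P := fun x : g => ⁅J Z, x⁆ = 0)
    (lie_zero _) (fun x hx => ?_) Y)
  have h := dC_bismutC_center_eq J hJ2 hJint B hBJ hZ hx
  rw [hSKT] at h
  by_contra hu
  linarith [hpos _ hu]

/-- if the center of a nilpotent Lie algebra with complex structure `J` is not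
`J`-invariant, then no `J`-compatible inner product is SKT. -/
theorem no_SKT_of_center_not_J_invariant
    {g : Type*} [LieRing g] [LieAlgebra ℝ g] [FiniteDimensional ℝ g]
    [LieRing.IsNilpotent g]
    (J : g →ₗ[ℝ] g)
    (hJ2 : ∀ X : g, J (J X) = -X)
    (hJint : ∀ X Y : g, ⁅X, Y⁆ - ⁅J X, J Y⁆ + J ⁅J X, Y⁆ + J ⁅X, J Y⁆ = 0)
    (hcenter : ∃ X : g, (∀ Y : g, ⁅X, Y⁆ = 0) ∧ ∃ Y : g, ⁅J X, Y⁆ ≠ 0) :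
    ∀ B : g →ₗ[ℝ] g →ₗ[ℝ] ℝ,
      (∀ X Y : g, B X Y = B Y X) →
      (∀ X : g, X ≠ 0 → 0 < B X X) →
      (∀ X Y : g, B (J X) (J Y) = B X Y) →
      ∃ X Y Z W : g, dC (bismutC (fun a b => B a b) J) X Y Z W ≠ 0 :=
  no_SKT_of_center_not_J_invariant_general J hJ2 hJint hcenter
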